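/- Let R be a Noetherian supercommutative superring and M a nonzero R-supermodule. Then the set of associated primes 𝔞𝔰𝔰(M) is nonempty, i.e., there exists a prime ideal 𝔭 of R and a nonzero homogeneous element m ∈ M with 𝔭 = Ann(m). -/

import Mathlib

/-!
Take `m ≠ 0` homogeneous with `Ann(m)` maximal among annihilators of nonzero homogeneous
elements; these are superideals, because the sign rule makes the left annihilator of a
homogeneous element a graded two-sided ideal, so the ascending chain condition applies.
If `(a * b) • m = 0` with `b` homogeneous and `b • m ≠ 0`, then `Ann(m) ⊆ Ann(b • m)` as
`Ann(m)` is a right ideal, and maximality forces equality, so `a • m = 0`. An odd `x`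
satisfies `x * x = -(x * x)`, hence `x * x = 0` as `2` is regular, and therefore `x` kills
`m`. So only the even part of an element matters, and `Ann(m)` is prime.
-/

open DirectSum

/-- A `ZMod 2`-grading on a ring is supercommutative if homogeneous elements satisfy the
sign rule `x * y = (-1)^(|x||y|) * (y * x)`. -/
def SuperCommutative {R : Type*} [Ring R] (𝒜 : ZMod 2 → AddSubgroup R) : Prop :=
  ∀ (i j : ZMod 2) (x y : R), x ∈ 𝒜 i → y ∈ 𝒜 j →
    x * y = ((-1 : ℤ) ^ (i.val * j.val)) • (y * x)

/-- `2` is a non-zerodivisor in `R`. -/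
def TwoRegular (R : Type*) [Ring R] : Prop := ∀ x : R, 2 * x = 0 → x = 0

/-- A two-sided ideal is a superideal if it is graded, i.e. it contains the homogeneous
components of each of its elements. -/
def IsSuperIdeal {R : Type*} [Ring R] (𝒜 : ZMod 2 → AddSubgroup R) [GradedRing 𝒜]
    (I : TwoSidedIdeal R) : Prop :=
  ∀ x ∈ I, ∀ i, (DirectSum.decompose 𝒜 x i : R) ∈ I

/-- An ideal of a superring is prime if the quotient ring is an integral domain. -/
def IsPrimeSuperIdeal {R : Type*} [Ring R] (I : TwoSidedIdeal R) : Prop :=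
  IsDomain I.ringCon.Quotient

/-- An ideal of a superring is maximal if the quotient ring is a field. -/
def IsMaximalSuperIdeal {R : Type*} [Ring R] (I : TwoSidedIdeal R) : Prop :=
  IsField I.ringCon.Quotient

/-- A superring is Noetherian if it satisfies the ascending chain condition on superideals. -/
def SuperNoetherian {R : Type*} [Ring R] (𝒜 : ZMod 2 → AddSubgroup R) [GradedRing 𝒜] : Prop :=
  ∀ f : ℕ →o TwoSidedIdeal R, (∀ n, IsSuperIdeal 𝒜 (f n)) → ∃ n, ∀ m, n ≤ m → f m = f n

/-- The action of a graded ring on a graded module is compatible with the gradings. -/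
def GradedSMul {R : Type*} [Ring R] (𝒜 : ZMod 2 → AddSubgroup R)
    {M : Type*} [AddCommGroup M] [Module R M] (ℳ : ZMod 2 → AddSubgroup M) : Prop :=
  ∀ (i j : ZMod 2) (r : R) (m : M), r ∈ 𝒜 i → m ∈ ℳ j → r • m ∈ ℳ (i + j)

section Decomposition

variable {ι A : Type*} [DecidableEq ι] [AddCommGroup A] (ℳ : ι → AddSubgroup A)
  [DirectSum.Decomposition ℳ]

theorem exists_decompose_ne_zero {x : A} (hx : x ≠ 0) : ∃ i, (decompose ℳ x i : A) ≠ 0 := by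
  by_contra! h
  exact hx <| (decompose ℳ).injective <| by
    ext i
    simp [h i]

variable {ℳ} in
theorem eq_zero_of_add_eq_zero_of_mem_of_ne {p q : ι} (hpq : p ≠ q) {a b : A}
    (ha : a ∈ ℳ p) (hb : b ∈ ℳ q) (hab : a + b = 0) : a = 0 := by
  simpa [decompose_of_mem_same ℳ ha, decompose_of_mem_ne ℳ hb hpq.symm] using
    congr_arg (fun x => (decompose ℳ x p : A)) hab

end Decomposition

theorem decompose_zero_add_decompose_one {A : Type*} [AddCommGroup A]
    (ℳ : ZMod 2 → AddSubgroup A) [DirectSum.Decomposition ℳ] (x : A) :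
    (decompose ℳ x 0 : A) + decompose ℳ x 1 = x := by
  conv_rhs => rw [← (decompose ℳ).symm_apply_apply x, ← DirectSum.sum_univ_of (decompose ℳ x)]
  simp only [decompose_symm_sum, decompose_symm_of]
  exact (Fin.sum_univ_two (fun i => (decompose ℳ x i : A))).symm

theorem SuperNoetherian.exists_maximal {R : Type*} [Ring R] {𝒜 : ZMod 2 → AddSubgroup R}
    [GradedRing 𝒜] (hN : SuperNoetherian 𝒜) {s : Set (TwoSidedIdeal R)}
    (hs : ∀ I ∈ s, IsSuperIdeal 𝒜 I) (hne : s.Nonempty) : ∃ I, Maximal (· ∈ s) I := by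
  have : WellFoundedGT {I : TwoSidedIdeal R // IsSuperIdeal 𝒜 I} := by
    refine wellFoundedGT_iff_monotone_chain_condition.mpr fun f => ?_
    obtain ⟨n, hn⟩ := hN ⟨fun k => (f k).1, fun _ _ h => f.monotone h⟩ fun k => (f k).2
    exact ⟨n, fun k hk => Subtype.ext (hn k hk).symm⟩
  obtain ⟨I, hI⟩ := hne
  obtain ⟨⟨J, _⟩, hJ⟩ :=
    exists_maximal_of_wellFoundedGT (fun J : {I // IsSuperIdeal 𝒜 I} => J.1 ∈ s) ⟨⟨I, hs I hI⟩, hI⟩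
  exact ⟨J, hJ.1, fun K hK hJK => hJ.2 (y := ⟨K, hs K hK⟩) hK hJK⟩

theorem isPrimeSuperIdeal_of_mul_mem {R : Type*} [Ring R] {I : TwoSidedIdeal R}
    (h1 : (1 : R) ∉ I) (hI : ∀ x y, x * y ∈ I → x ∈ I ∨ y ∈ I) : IsPrimeSuperIdeal I := by
  have hmem (x : R) : I.ringCon.mk' x = 0 ↔ x ∈ I := by
    conv_rhs => rw [← TwoSidedIdeal.ker_ringCon_mk' I]
    exact TwoSidedIdeal.mem_ker _ |>.symm
  have : Nontrivial I.ringCon.Quotient :=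
    ⟨⟨0, 1, fun h => h1 ((hmem 1).mp (by simpa using h.symm))⟩⟩
  have : NoZeroDivisors I.ringCon.Quotient := by
    refine ⟨fun {a b} hab => ?_⟩
    obtain ⟨x, rfl⟩ := I.ringCon.mk'_surjective a
    obtain ⟨y, rfl⟩ := I.ringCon.mk'_surjective b
    rw [← map_mul, hmem] at hab
    simpa only [hmem] using hI x y hab
  exact NoZeroDivisors.to_isDomain _

section Superring

variable {R : Type*} [Ring R] {𝒜 : ZMod 2 → AddSubgroup R}
  {M : Type*} [AddCommGroup M] [Module R M] {ℳ : ZMod 2 → AddSubgroup M}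

theorem mul_self_eq_zero_of_mem_odd (hsc : SuperCommutative 𝒜) (h2 : TwoRegular R) {x : R}
    (hx : x ∈ 𝒜 1) : x * x = 0 := by
  have hanti : x * x = -(x * x) := by
    simpa [show (1 : ZMod 2).val = 1 from rfl] using hsc 1 1 x x hx hx
  exact h2 _ (by rw [two_mul]; nth_rewrite 1 [hanti]; exact neg_add_cancel _)

theorem mul_smul_eq_zero_of_mem (hsc : SuperCommutative 𝒜) {i j : ZMod 2} {x y : R}
    (hx : x ∈ 𝒜 i) (hy : y ∈ 𝒜 j) {m : M} (hxm : x • m = 0) : (x * y) • m = 0 := by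
  rw [hsc i j x y hx hy, zsmul_eq_mul, mul_smul, mul_smul, hxm, smul_zero, smul_zero]

variable [GradedRing 𝒜] [DirectSum.Decomposition ℳ]

theorem decompose_smul_eq_zero (hact : GradedSMul 𝒜 ℳ) {j : ZMod 2} {m : M} (hm : m ∈ ℳ j)
    {r : R} (hr : r • m = 0) (i : ZMod 2) : (decompose 𝒜 r i : R) • m = 0 := by
  have hsum : (decompose 𝒜 r 0 : R) • m + (decompose 𝒜 r 1 : R) • m = 0 := by
    rw [← add_smul, decompose_zero_add_decompose_one, hr]
  have hne : (0 : ZMod 2) + j ≠ 1 + j := by simp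
  have h0 := hact 0 j _ m (decompose 𝒜 r 0).2 hm
  have h1 := hact 1 j _ m (decompose 𝒜 r 1).2 hm
  fin_cases i
  · exact eq_zero_of_add_eq_zero_of_mem_of_ne hne h0 h1 hsum
  · exact eq_zero_of_add_eq_zero_of_mem_of_ne hne.symm h1 h0 (by rwa [add_comm])

theorem mul_smul_eq_zero (hsc : SuperCommutative 𝒜) (hact : GradedSMul 𝒜 ℳ) {j : ZMod 2}
    {m : M} (hm : m ∈ ℳ j) {x : R} (hx : x • m = 0) (y : R) : (x * y) • m = 0 := by
  have hterm (i k : ZMod 2) : ((decompose 𝒜 x i : R) * decompose 𝒜 y k) • m = 0 :=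
    mul_smul_eq_zero_of_mem hsc (decompose 𝒜 x i).2 (decompose 𝒜 y k).2
      (decompose_smul_eq_zero hact hm hx i)
  rw [← decompose_zero_add_decompose_one 𝒜 x, ← decompose_zero_add_decompose_one 𝒜 y]
  simp only [add_mul, mul_add, add_smul, hterm, add_zero]

theorem exists_twoSidedIdeal_mem_iff_smul_eq_zero (hsc : SuperCommutative 𝒜)
    (hact : GradedSMul 𝒜 ℳ) {j : ZMod 2} {m : M} (hm : m ∈ ℳ j) :
    ∃ I : TwoSidedIdeal R, ∀ r, r ∈ I ↔ r • m = 0 :=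
  ⟨TwoSidedIdeal.mk' {r | r • m = 0} (zero_smul R m)
    (fun hx hy => by simp_all [add_smul]) (fun hx => by simp_all [neg_smul])
    (fun hy => by simp_all [mul_smul]) (fun hx => mul_smul_eq_zero hsc hact hm hx _),
    fun _ => TwoSidedIdeal.mem_mk' ..⟩

variable (ℳ) in
def homogeneousAnnihilators : Set (TwoSidedIdeal R) :=
  {I | ∃ m : M, m ≠ 0 ∧ (∃ j, m ∈ ℳ j) ∧ ∀ r, r ∈ I ↔ r • m = 0}

theorem isSuperIdeal_of_mem_homogeneousAnnihilators (hact : GradedSMul 𝒜 ℳ)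
    {I : TwoSidedIdeal R} (hI : I ∈ homogeneousAnnihilators ℳ) : IsSuperIdeal 𝒜 I := by
  obtain ⟨m, -, ⟨j, hm⟩, hIm⟩ := hI
  intro x hx i
  rw [hIm] at hx ⊢
  exact decompose_smul_eq_zero hact hm hx i

theorem smul_eq_zero_of_mul_smul_eq_zero (hsc : SuperCommutative 𝒜) (hact : GradedSMul 𝒜 ℳ)
    {I : TwoSidedIdeal R} (hI : Maximal (· ∈ homogeneousAnnihilators ℳ) I) {j : ZMod 2} {m : M}
    (hm : m ∈ ℳ j) (hIm : ∀ r, r ∈ I ↔ r • m = 0) {k : ZMod 2} {a b : R} (hb : b ∈ 𝒜 k)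
    (hab : (a * b) • m = 0) (hbm : b • m ≠ 0) : a • m = 0 := by
  have hbm_mem : b • m ∈ ℳ (k + j) := hact k j b m hb hm
  obtain ⟨J, hJ⟩ := exists_twoSidedIdeal_mem_iff_smul_eq_zero hsc hact hbm_mem
  have hIJ : I ≤ J := fun r hr => by
    rw [hJ, ← mul_smul]
    exact mul_smul_eq_zero hsc hact hm ((hIm r).mp hr) b
  have hJI : J ≤ I := hI.2 ⟨b • m, hbm, ⟨k + j, hbm_mem⟩, hJ⟩ hIJ
  exact (hIm a).mp (hJI ((hJ a).mpr (by rwa [← mul_smul])))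

theorem isPrimeSuperIdeal_of_maximal (hsc : SuperCommutative 𝒜) (h2 : TwoRegular R)
    (hact : GradedSMul 𝒜 ℳ) {I : TwoSidedIdeal R}
    (hI : Maximal (· ∈ homogeneousAnnihilators ℳ) I) : IsPrimeSuperIdeal I := by
  obtain ⟨m, hm0, ⟨j, hm⟩, hIm⟩ := hI.1
  have hodd {z : R} (hz : z ∈ 𝒜 1) : z • m = 0 := by
    by_contra hzm
    refine hzm (smul_eq_zero_of_mul_smul_eq_zero hsc hact hI hm hIm hz ?_ hzm)
    rw [mul_self_eq_zero_of_mem_odd hsc h2 hz, zero_smul]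
  have heven (y : R) : y • m = (decompose 𝒜 y 0 : R) • m := by
    conv_lhs => rw [← decompose_zero_add_decompose_one 𝒜 y]
    rw [add_smul, hodd (decompose 𝒜 y 1).2, add_zero]
  refine isPrimeSuperIdeal_of_mul_mem (by rwa [hIm, one_smul]) fun x y hxy => ?_
  simp only [hIm] at hxy ⊢
  rw [mul_smul, heven, ← mul_smul] at hxy
  rw [heven y]
  by_cases hy : (decompose 𝒜 y 0 : R) • m = 0
  · exact Or.inr hy
  · exact Or.inl (smul_eq_zero_of_mul_smul_eq_zero hsc hact hI hm hIm (decompose 𝒜 y 0).2 hxy hy)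

end Superring

/-- Over a Noetherian superring, every nonzero supermodule has an associated prime: a prime
ideal which is the annihilator of a nonzero homogeneous element. -/
theorem exists_associated_prime {R : Type*} [Ring R]
    (𝒜 : ZMod 2 → AddSubgroup R) [GradedRing 𝒜]
    (hsc : SuperCommutative 𝒜) (h2 : TwoRegular R) (hN : SuperNoetherian 𝒜)
    (M : Type*) [AddCommGroup M] [Module R M] (ℳ : ZMod 2 → AddSubgroup M)
    [DirectSum.Decomposition ℳ] (hact : GradedSMul 𝒜 ℳ)
    (hM : ∃ m : M, m ≠ 0) :
    ∃ 𝔭 : TwoSidedIdeal R, IsPrimeSuperIdeal 𝔭 ∧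
      ∃ m : M, m ≠ 0 ∧ (∃ i, m ∈ ℳ i) ∧ ∀ r : R, r ∈ 𝔭 ↔ r • m = 0 := by
  obtain ⟨m₀, hm₀⟩ := hM
  obtain ⟨i, hi⟩ := exists_decompose_ne_zero ℳ hm₀
  have hmi := (decompose ℳ m₀ i).2
  obtain ⟨I₀, hI₀⟩ := exists_twoSidedIdeal_mem_iff_smul_eq_zero hsc hact hmi
  obtain ⟨I, hI⟩ := hN.exists_maximal
    (fun _ => isSuperIdeal_of_mem_homogeneousAnnihilators hact) ⟨I₀, _, hi, ⟨i, hmi⟩, hI₀⟩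
  exact ⟨I, isPrimeSuperIdeal_of_maximal hsc h2 hact hI, hI.1⟩
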